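/- arXiv:1311.2001 — 5 statements merged into one kernel-verified Lean document; each statement's English description precedes it below -/
import Mathlib

section
/- Let p > 1. There exists a constant c = c(p) > 0 such that for all ξ, η ∈ ℝ^(d×D): ∫₀¹ (1 + |ξ + s(η − ξ)|)^(p-2) ds ≥ c (1 + |ξ| + |η − ξ|)^(p-2). -/
private lemma af_cont {E : Type*} [NormedAddCommGroup E] [NormedSpace ℝ E]
    (ξ u : E) (q : ℝ) :
    Continuous fun s : ℝ => (1 + ‖ξ + s • u‖) ^ q := by
  apply Continuous.rpow_const
  · continuity
  · intro s
    left
    positivity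

/-- Acerbi–Fusco type lower bound for `p > 1`. -/
theorem acerbi_fusco_lower (d D : ℕ) (p : ℝ) (hp : 1 < p) :
    ∃ c : ℝ, 0 < c ∧ ∀ ξ η : EuclideanSpace ℝ (Fin d × Fin D),
      c * (1 + ‖ξ‖ + ‖η - ξ‖) ^ (p - 2) ≤
        ∫ s in (0:ℝ)..1, (1 + ‖ξ + s • (η - ξ)‖) ^ (p - 2) := by
  rcases le_or_gt p 2 with hp2 | hp2
  · -- case 1 < p ≤ 2 : exponent p-2 ≤ 0, use that the integrand is ≥ (1+a+b)^(p-2)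
    refine ⟨1, one_pos, fun ξ η => ?_⟩
    rw [one_mul]
    set u := η - ξ with hu
    have ha : (0:ℝ) ≤ ‖ξ‖ := norm_nonneg _
    have hb : (0:ℝ) ≤ ‖u‖ := norm_nonneg _
    have hconst : (1 + ‖ξ‖ + ‖u‖) ^ (p - 2)
        = ∫ s in (0:ℝ)..1, (1 + ‖ξ‖ + ‖u‖) ^ (p - 2) := by simp
    rw [hconst]
    apply intervalIntegral.integral_mono_on (by norm_num)
      (intervalIntegrable_const) ((af_cont ξ u (p-2)).intervalIntegrable _ _)
    intro s hs
    apply Real.rpow_le_rpow_of_nonpos (by positivity) ?_ (by linarith)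
    have h1 : ‖ξ + s • u‖ ≤ ‖ξ‖ + ‖s • u‖ := norm_add_le _ _
    have h2 : ‖s • u‖ = |s| * ‖u‖ := by rw [norm_smul, Real.norm_eq_abs]
    have h3 : |s| = s := abs_of_nonneg hs.1
    have h4 : s * ‖u‖ ≤ 1 * ‖u‖ := mul_le_mul_of_nonneg_right hs.2 hb
    rw [h2, h3] at h1
    linarith
  · -- case p > 2 : exponent q := p-2 > 0
    have hq : (0:ℝ) ≤ p - 2 := by linarith
    refine ⟨(1/4 : ℝ) * ((1:ℝ)/6) ^ (p - 2), by positivity, fun ξ η => ?_⟩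
    set u := η - ξ with hu
    set a := ‖ξ‖ with hadef
    set b := ‖u‖ with hbdef
    have ha : (0:ℝ) ≤ a := norm_nonneg _
    have hb : (0:ℝ) ≤ b := norm_nonneg _
    -- find an interval [t, t+1/4] ⊆ [0,1] on which 1+‖ξ+s•u‖ ≥ (1+a+b)/6
    obtain ⟨t, ht0, ht1, hlow⟩ :
        ∃ t : ℝ, 0 ≤ t ∧ t + 1/4 ≤ 1 ∧
          ∀ s ∈ Set.Icc t (t + 1/4), (1 + a + b) / 6 ≤ 1 + ‖ξ + s • u‖ := by
      rcases le_or_gt b (2 * a) with hcase | hcase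
      · refine ⟨0, le_refl _, by norm_num, fun s hs => ?_⟩
        have hs0 : 0 ≤ s := hs.1
        have hs4 : s ≤ 1/4 := by simpa using hs.2
        have h1 : a ≤ ‖ξ + s • u‖ + ‖s • u‖ := by
          calc a = ‖(ξ + s • u) - s • u‖ := by rw [add_sub_cancel_right]
            _ ≤ ‖ξ + s • u‖ + ‖s • u‖ := norm_sub_le _ _
        have h2 : ‖s • u‖ = s * b := by
          rw [norm_smul, Real.norm_eq_abs, abs_of_nonneg hs0, hbdef]
        have h3 : s * b ≤ (1/4) * (2 * a) := by
          apply mul_le_mul hs4 hcase hb (by norm_num)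
        rw [h2] at h1
        linarith
      · refine ⟨3/4, by norm_num, by norm_num, fun s hs => ?_⟩
        have hs0 : (3/4 : ℝ) ≤ s := hs.1
        have hs1 : s ≤ 1 := by
          have := hs.2; linarith
        have h1 : ‖s • u‖ ≤ ‖ξ + s • u‖ + a := by
          calc ‖s • u‖ = ‖(ξ + s • u) - ξ‖ := by rw [add_sub_cancel_left]
            _ ≤ ‖ξ + s • u‖ + ‖ξ‖ := norm_sub_le _ _
        have h2 : ‖s • u‖ = s * b := by
          rw [norm_smul, Real.norm_eq_abs, abs_of_nonneg (by linarith), hbdef]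
        have h3 : (3/4) * b ≤ s * b := mul_le_mul_of_nonneg_right hs0 hb
        rw [h2] at h1
        linarith
    -- integrability and nonnegativity
    have hint : ∀ x y : ℝ, IntervalIntegrable
        (fun s : ℝ => (1 + ‖ξ + s • u‖) ^ (p - 2)) MeasureTheory.volume x y :=
      fun x y => (af_cont ξ u (p-2)).intervalIntegrable x y
    have hnn : ∀ s : ℝ, 0 ≤ (1 + ‖ξ + s • u‖) ^ (p - 2) := by
      intro s; positivity
    -- split the integral
    have hsplit1 : ∫ s in (0:ℝ)..1, (1 + ‖ξ + s • u‖) ^ (p - 2)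
        = (∫ s in (0:ℝ)..t, (1 + ‖ξ + s • u‖) ^ (p - 2))
          + ∫ s in t..1, (1 + ‖ξ + s • u‖) ^ (p - 2) :=
      (intervalIntegral.integral_add_adjacent_intervals (hint 0 t) (hint t 1)).symm
    have hsplit2 : ∫ s in t..1, (1 + ‖ξ + s • u‖) ^ (p - 2)
        = (∫ s in t..(t+1/4), (1 + ‖ξ + s • u‖) ^ (p - 2))
          + ∫ s in (t+1/4)..1, (1 + ‖ξ + s • u‖) ^ (p - 2) :=
      (intervalIntegral.integral_add_adjacent_intervals (hint t (t+1/4)) (hint (t+1/4) 1)).symm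
    have hpos1 : 0 ≤ ∫ s in (0:ℝ)..t, (1 + ‖ξ + s • u‖) ^ (p - 2) :=
      intervalIntegral.integral_nonneg ht0 (fun s _ => hnn s)
    have hpos2 : 0 ≤ ∫ s in (t+1/4)..1, (1 + ‖ξ + s • u‖) ^ (p - 2) :=
      intervalIntegral.integral_nonneg ht1 (fun s _ => hnn s)
    -- bound the middle integral below
    have hmid : (1/4 : ℝ) * ((1 + a + b)/6) ^ (p - 2)
        ≤ ∫ s in t..(t+1/4), (1 + ‖ξ + s • u‖) ^ (p - 2) := by
      have hconst : ∫ s in t..(t+1/4), ((1 + a + b)/6) ^ (p - 2)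
          = (1/4 : ℝ) * ((1 + a + b)/6) ^ (p - 2) := by
        simp [mul_comm]
      rw [← hconst]
      apply intervalIntegral.integral_mono_on (by linarith)
        intervalIntegrable_const (hint t (t+1/4))
      intro s hs
      exact Real.rpow_le_rpow (by positivity) (hlow s hs) hq
    have hfinal : (1/4 : ℝ) * ((1 + a + b)/6) ^ (p - 2)
        ≤ ∫ s in (0:ℝ)..1, (1 + ‖ξ + s • u‖) ^ (p - 2) := by
      rw [hsplit1, hsplit2]; linarith
    calc (1/4 : ℝ) * ((1:ℝ)/6) ^ (p - 2) * (1 + a + b) ^ (p - 2)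
        = (1/4 : ℝ) * ((1 + a + b)/6) ^ (p - 2) := by
          rw [mul_assoc, ← Real.mul_rpow (by norm_num) (by positivity)]
          congr 2
          ring
      _ ≤ _ := hfinal
end

section
/- Let p ∈ (1,∞) and define F : ℝ^(d×D) → ℝ^(d×D) by F(ξ) = (1+|ξ|)^((p-2)/2) ξ. Then there exist constants c, C > 0 depending only on p such that for all ξ, η: c (1+|ξ|+|η|)^(p-2) |ξ − η|² ≤ |F(ξ) − F(η)|² ≤ C (1+|ξ|+|η|)^(p-2) |ξ − η|². -/
/-!
Put `q = (p - 2) / 2`, `u = (1 + |ξ|)^q`, `v = (1 + |η|)^q` and let `|η| ≤ |ξ|`. Since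
`1 + |ξ| ≤ 1 + |ξ| + |η| ≤ 2 (1 + |ξ|)`, it suffices to compare `|F ξ - F η|` with `u |ξ - η|`.
Writing `F ξ - F η = u (ξ - η) + (u - v) η`, the tangent-line inequalities for `t ↦ t^q` give
`|u - v| |η| ≤ |q| u (|ξ| - |η|)`, whence `| |F ξ - F η| - u |ξ - η| | ≤ |q| u |ξ - η|`. This is the
upper bound, and for `-1/2 < q < 0` also the lower one. For `q ≥ 0` the lower bound comes from
monotonicity instead: `⟨F ξ - F η, ξ - η⟩ = (u + v)/2 |ξ - η|² + (u - v)/2 (|ξ|² - |η|²)` and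
`u ≥ v`.
-/

open Real

namespace Real

theorem rpow_mul_one_add_mul_div_sub_one {x y : ℝ} (hy : 0 < y) (r : ℝ) :
    y ^ r * (1 + r * (x / y - 1)) = y ^ r + r * y ^ (r - 1) * (x - y) := by
  rw [rpow_sub_one hy.ne']
  field_simp

theorem rpow_le_rpow_add_mul_sub {x y r : ℝ} (hx : 0 ≤ x) (hy : 0 < y) (hr₀ : 0 ≤ r)
    (hr₁ : r ≤ 1) : x ^ r ≤ y ^ r + r * y ^ (r - 1) * (x - y) := by
  have hxy : -1 ≤ x / y - 1 := by linarith [div_nonneg hx hy.le]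
  have := mul_le_mul_of_nonneg_left (rpow_one_add_le_one_add_mul_self hxy hr₀ hr₁)
    (rpow_nonneg hy.le r)
  rwa [add_sub_cancel, div_rpow hx hy.le, mul_div_cancel₀ _ (rpow_pos_of_pos hy r).ne',
    rpow_mul_one_add_mul_div_sub_one hy] at this

theorem rpow_add_mul_sub_le_rpow {x y r : ℝ} (hx : 0 ≤ x) (hy : 0 < y) (hr : 1 ≤ r) :
    y ^ r + r * y ^ (r - 1) * (x - y) ≤ x ^ r := by
  have hxy : -1 ≤ x / y - 1 := by linarith [div_nonneg hx hy.le]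
  have := mul_le_mul_of_nonneg_left (one_add_mul_self_le_rpow_one_add hxy hr)
    (rpow_nonneg hy.le r)
  rwa [add_sub_cancel, div_rpow hx hy.le, mul_div_cancel₀ _ (rpow_pos_of_pos hy r).ne',
    rpow_mul_one_add_mul_div_sub_one hy] at this

theorem rpow_le_rpow_abs_mul_rpow {K x y : ℝ} (hx : 0 < x) (hy : 0 < y) (hxy : x ≤ K * y)
    (hyx : y ≤ K * x) (q : ℝ) : x ^ q ≤ K ^ |q| * y ^ q := by
  have hK : 0 < K := pos_of_mul_pos_left (hx.trans_le hxy) hy.le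
  rcases le_or_gt 0 q with hq | hq
  · rw [abs_of_nonneg hq, ← mul_rpow hK.le hy.le]
    exact rpow_le_rpow hx.le hxy hq
  · rw [abs_of_neg hq, rpow_neg hK.le, ← div_eq_inv_mul, le_div_iff₀ (rpow_pos_of_pos hK _),
      ← mul_rpow hx.le hK.le]
    exact rpow_le_rpow_of_nonpos hy (by linarith) hq.le

theorem abs_rpow_sub_rpow_mul_le {q x y : ℝ} (hq : -1 ≤ q) (hy : 0 < y) (hyx : y ≤ x) :
    |x ^ q - y ^ q| * y ≤ |q| * x ^ q * (x - y) := by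
  have hx : 0 < x := hy.trans_le hyx
  rcases le_or_gt 0 q with hq₀ | hq₀
  · rw [abs_of_nonneg (sub_nonneg.2 (rpow_le_rpow hy.le hyx hq₀)), abs_of_nonneg hq₀]
    rcases le_total q 1 with hq₁ | hq₁
    · have tangent := rpow_le_rpow_add_mul_sub hx.le hy hq₀ hq₁
      have hyq : y ^ (q - 1) * y = y ^ q := by rw [rpow_sub_one hy.ne', div_mul_cancel₀ _ hy.ne']
      calc (x ^ q - y ^ q) * y ≤ q * y ^ (q - 1) * (x - y) * y := by gcongr; linarith
        _ = q * y ^ q * (x - y) := by rw [← hyq]; ring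
        _ ≤ q * x ^ q * (x - y) := by gcongr
    · have tangent := rpow_add_mul_sub_le_rpow hy.le hx hq₁
      have hxq : x ^ (q - 1) * x = x ^ q := by rw [rpow_sub_one hx.ne', div_mul_cancel₀ _ hx.ne']
      calc (x ^ q - y ^ q) * y ≤ q * x ^ (q - 1) * (x - y) * y := by gcongr; linarith
        _ ≤ q * x ^ (q - 1) * (x - y) * x := by gcongr
        _ = q * x ^ q * (x - y) := by rw [← hxq]; ring
  · rw [abs_of_nonpos (sub_nonpos.2 (rpow_le_rpow_of_nonpos hy hyx hq₀.le)), abs_of_neg hq₀]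
    have tangent := rpow_le_rpow_add_mul_sub hx.le hy (neg_nonneg.2 hq₀.le) (neg_le.1 hq)
    calc -(x ^ q - y ^ q) * y = x ^ q * y ^ q * (x ^ (-q) - y ^ (-q)) * y := by
          rw [rpow_neg hx.le, rpow_neg hy.le]; field_simp; ring
      _ ≤ x ^ q * y ^ q * (-q * y ^ (-q - 1) * (x - y)) * y := by gcongr; linarith
      _ = -q * x ^ q * (x - y) := by
          rw [rpow_sub_one hy.ne', rpow_neg hy.le]; field_simp

end Real

section NormedSpace

variable {E : Type*} [NormedAddCommGroup E] [NormedSpace ℝ E]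

theorem abs_norm_rpow_smul_sub_sub_le {q : ℝ} (hq : -1 ≤ q) {ξ η : E} (h : ‖η‖ ≤ ‖ξ‖) :
    |‖(1 + ‖ξ‖) ^ q • ξ - (1 + ‖η‖) ^ q • η‖ - (1 + ‖ξ‖) ^ q * ‖ξ - η‖| ≤
      |q| * (1 + ‖ξ‖) ^ q * ‖ξ - η‖ := by
  set u := (1 + ‖ξ‖) ^ q
  set v := (1 + ‖η‖) ^ q
  have hu : 0 ≤ u := by positivity
  have split : u • ξ - v • η - u • (ξ - η) = (u - v) • η := by
    rw [smul_sub, sub_smul]; abel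
  calc |‖u • ξ - v • η‖ - u * ‖ξ - η‖|
      = |‖u • ξ - v • η‖ - ‖u • (ξ - η)‖| := by rw [norm_smul, Real.norm_of_nonneg hu]
    _ ≤ ‖(u - v) • η‖ := split ▸ abs_norm_sub_norm_le _ _
    _ = |u - v| * ‖η‖ := by rw [norm_smul, Real.norm_eq_abs]
    _ ≤ |u - v| * (1 + ‖η‖) := by gcongr; linarith
    _ ≤ |q| * u * (1 + ‖ξ‖ - (1 + ‖η‖)) :=
        abs_rpow_sub_rpow_mul_le hq (by positivity) (by linarith)
    _ ≤ |q| * u * ‖ξ - η‖ := by gcongr; linarith [norm_sub_norm_le ξ η]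

end NormedSpace

section InnerProductSpace

variable {E : Type*} [NormedAddCommGroup E] [InnerProductSpace ℝ E]

open scoped RealInnerProductSpace

theorem inner_smul_sub_smul_sub (u v : ℝ) (ξ η : E) :
    ⟪u • ξ - v • η, ξ - η⟫ = (u + v) / 2 * ‖ξ - η‖ ^ 2 + (u - v) / 2 * (‖ξ‖ ^ 2 - ‖η‖ ^ 2) := by
  rw [norm_sub_sq_real, inner_sub_left, inner_sub_right, inner_sub_right, real_inner_smul_left,
    real_inner_smul_left, real_inner_smul_left, real_inner_smul_left, real_inner_self_eq_norm_sq,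
    real_inner_self_eq_norm_sq, real_inner_comm η ξ]
  ring

theorem mul_norm_le_norm_of_mul_sq_le_inner {c : ℝ} {x y : E} (h : c * ‖y‖ ^ 2 ≤ ⟪x, y⟫) :
    c * ‖y‖ ≤ ‖x‖ := by
  rcases (norm_nonneg y).eq_or_lt with hy | hy
  · rw [← hy, mul_zero]; exact norm_nonneg x
  · have := h.trans (real_inner_le_norm x y)
    rw [sq, ← mul_assoc] at this
    exact le_of_mul_le_mul_right this hy

theorem half_mul_le_norm_rpow_smul_sub {q : ℝ} (hq : -(1 / 2) ≤ q) {ξ η : E} (h : ‖η‖ ≤ ‖ξ‖) :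
    (1 + ‖ξ‖) ^ q / 2 * ‖ξ - η‖ ≤ ‖(1 + ‖ξ‖) ^ q • ξ - (1 + ‖η‖) ^ q • η‖ := by
  rcases le_or_gt 0 q with hq₀ | hq₀
  · apply mul_norm_le_norm_of_mul_sq_le_inner
    rw [inner_smul_sub_smul_sub]
    have hvu : (1 + ‖η‖) ^ q ≤ (1 + ‖ξ‖) ^ q := by gcongr
    have hv : 0 ≤ (1 + ‖η‖) ^ q := by positivity
    have : 0 ≤ ‖ξ‖ ^ 2 - ‖η‖ ^ 2 := by nlinarith [norm_nonneg η]
    nlinarith [mul_nonneg (sub_nonneg.2 hvu) this, sq_nonneg ‖ξ - η‖]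
  · have := abs_le.1 (abs_norm_rpow_smul_sub_sub_le (q := q) (by linarith) h)
    rw [abs_of_neg hq₀] at this
    have : 0 ≤ (1 + ‖ξ‖) ^ q * ‖ξ - η‖ := by positivity
    nlinarith

theorem one_add_norm_rpow_smul_sub_bounds {q : ℝ} (hq : -(1 / 2) ≤ q) (ξ η : E) :
    (2 * 2 ^ |q|)⁻¹ * (1 + ‖ξ‖ + ‖η‖) ^ q * ‖ξ - η‖ ≤ ‖(1 + ‖ξ‖) ^ q • ξ - (1 + ‖η‖) ^ q • η‖ ∧
      ‖(1 + ‖ξ‖) ^ q • ξ - (1 + ‖η‖) ^ q • η‖ ≤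
        (1 + |q|) * 2 ^ |q| * (1 + ‖ξ‖ + ‖η‖) ^ q * ‖ξ - η‖ := by
  wlog h : ‖η‖ ≤ ‖ξ‖ generalizing ξ η
  · have := this η ξ (le_of_not_ge h)
    rwa [norm_sub_rev η, norm_sub_rev ((1 + ‖η‖) ^ q • η), add_right_comm 1 ‖η‖] at this
  have hx : 0 < 1 + ‖ξ‖ := by positivity
  have hS : 0 < 1 + ‖ξ‖ + ‖η‖ := by positivity
  have hxS : 1 + ‖ξ‖ ≤ 2 * (1 + ‖ξ‖ + ‖η‖) := by linarith [norm_nonneg η]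
  have hSx : 1 + ‖ξ‖ + ‖η‖ ≤ 2 * (1 + ‖ξ‖) := by linarith
  have hu := rpow_le_rpow_abs_mul_rpow hx hS hxS hSx q
  have ht := rpow_le_rpow_abs_mul_rpow hS hx hSx hxS q
  constructor
  · calc (2 * 2 ^ |q|)⁻¹ * (1 + ‖ξ‖ + ‖η‖) ^ q * ‖ξ - η‖
        ≤ (2 * 2 ^ |q|)⁻¹ * (2 ^ |q| * (1 + ‖ξ‖) ^ q) * ‖ξ - η‖ := by gcongr
      _ = (1 + ‖ξ‖) ^ q / 2 * ‖ξ - η‖ := by field_simp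
      _ ≤ _ := half_mul_le_norm_rpow_smul_sub hq h
  · have := (abs_le.1 (abs_norm_rpow_smul_sub_sub_le (q := q) (by linarith) h)).2
    calc _ ≤ (1 + |q|) * (1 + ‖ξ‖) ^ q * ‖ξ - η‖ := by linarith
      _ ≤ (1 + |q|) * (2 ^ |q| * (1 + ‖ξ‖ + ‖η‖) ^ q) * ‖ξ - η‖ := by gcongr
      _ = _ := by ring

end InnerProductSpace

/-- two-sided bound for the natural quantity `F(ξ) = (1+|ξ|)^((p-2)/2) ξ`. -/
theorem F_two_sided_bound (d D : ℕ) (p : ℝ) (hp : 1 < p)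
    (F : EuclideanSpace ℝ (Fin d × Fin D) → EuclideanSpace ℝ (Fin d × Fin D))
    (hF : ∀ ξ, F ξ = ((1 + ‖ξ‖) ^ ((p - 2) / 2) : ℝ) • ξ) :
    ∃ c C : ℝ, 0 < c ∧ 0 < C ∧ ∀ ξ η : EuclideanSpace ℝ (Fin d × Fin D),
      c * (1 + ‖ξ‖ + ‖η‖) ^ (p - 2) * ‖ξ - η‖ ^ 2 ≤ ‖F ξ - F η‖ ^ 2 ∧
      ‖F ξ - F η‖ ^ 2 ≤ C * (1 + ‖ξ‖ + ‖η‖) ^ (p - 2) * ‖ξ - η‖ ^ 2 := by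
  have hq : -(1 / 2) ≤ (p - 2) / 2 := by linarith
  set q := (p - 2) / 2
  refine ⟨((2 * 2 ^ |q|)⁻¹) ^ 2, ((1 + |q|) * 2 ^ |q|) ^ 2, by positivity, by positivity,
    fun ξ η => ?_⟩
  obtain ⟨lower, upper⟩ := one_add_norm_rpow_smul_sub_bounds hq ξ η
  have hexp : (1 + ‖ξ‖ + ‖η‖) ^ (p - 2) = ((1 + ‖ξ‖ + ‖η‖) ^ q) ^ 2 := by
    rw [← rpow_mul_natCast (by positivity)]; congr 1; push_cast; ring
  rw [hF, hF, hexp]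
  constructor
  · calc _ = ((2 * 2 ^ |q|)⁻¹ * (1 + ‖ξ‖ + ‖η‖) ^ q * ‖ξ - η‖) ^ 2 := by ring
      _ ≤ _ := pow_le_pow_left₀ (by positivity) lower 2
  · calc _ ≤ ((1 + |q|) * 2 ^ |q| * (1 + ‖ξ‖ + ‖η‖) ^ q * ‖ξ - η‖) ^ 2 :=
          pow_le_pow_left₀ (norm_nonneg _) upper 2
      _ = _ := by ring
end

section
/- Let p ∈ (1,∞), S(ξ) = (1+|ξ|)^(p-2) ξ and F(ξ) = (1+|ξ|)^((p-2)/2) ξ on ℝ^(d×D). Then there exists c = c(p) > 0 such that for all ξ, η: (S(ξ) − S(η)) : (ξ − η) ≥ c |F(ξ) − F(η)|². -/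
/-!
With `s = (p - 2) / 2`, `u = (1 + |ξ|) ^ s` and `v = (1 + |η|) ^ s` we have `S ξ = u² ξ`
and `F ξ = u ξ`. Once the norms `x = |ξ|`, `y = |η|` are fixed, the difference of the two sides
is affine and nonincreasing in `ξ : η ≤ x y` (for `c ≤ 1`), so the collinear case `ξ : η = x y`
is the worst one and the claim becomes a scalar inequality. There
`(u x - v y)² = (u² x - v² y)(x - y) + (u - v)² x y`, and for `y ≤ x` the first term is at
least `min 1 (p - 1) · u² (x - y)²` (weighted AM-GM when `p < 2`), while the second is at most
`(1 + s²) u² (x - y)²` (a Bernoulli-type bound on `1 - r ^ s` for `r = (1 + y) / (1 + x)`).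
-/

open Real

open scoped RealInnerProductSpace

lemma one_sub_rpow_sq_mul_le {r s : ℝ} (hr0 : 0 < r) (hr1 : r ≤ 1) (hs : -1 / 2 ≤ s) :
    (1 - r ^ s) ^ 2 * r ≤ (1 + s ^ 2) * (1 - r) ^ 2 := by
  rcases le_total 0 s with hs0 | hs0
  · have hrs : r ^ s ≤ 1 := rpow_le_one hr0.le hr1 hs0
    have hlin : 1 - r ^ s ≤ max 1 s * (1 - r) := by
      rcases le_total s 1 with hs1 | hs1
      · have : r ≤ r ^ s := by
          simpa using rpow_le_rpow_of_exponent_ge hr0 hr1 hs1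
        nlinarith [le_max_left 1 s]
      · have := one_add_mul_self_le_rpow_one_add (by linarith : -1 ≤ r - 1) hs1
        rw [add_sub_cancel] at this
        nlinarith [le_max_right 1 s]
    calc (1 - r ^ s) ^ 2 * r ≤ (1 - r ^ s) ^ 2 := mul_le_of_le_one_right (sq_nonneg _) hr1
      _ ≤ (max 1 s * (1 - r)) ^ 2 := pow_le_pow_left₀ (by linarith) hlin 2
      _ = max 1 s ^ 2 * (1 - r) ^ 2 := by ring
      _ ≤ (1 + s ^ 2) * (1 - r) ^ 2 := by
        gcongr
        rcases max_cases 1 s with ⟨h, -⟩ | ⟨h, -⟩ <;> rw [h] <;> nlinarith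
  · have h1 : r ^ s * r ≤ 1 := by
      rw [← rpow_add_one hr0.ne']; exact rpow_le_one hr0.le hr1 (by linarith)
    have h2 : r ^ s * r ^ s * r ≤ 1 := by
      rw [← rpow_add hr0, ← rpow_add_one hr0.ne']; exact rpow_le_one hr0.le hr1 (by linarith)
    have hrs : 1 ≤ r ^ s := one_le_rpow_of_pos_of_le_one_of_nonpos hr0 hr1 hs0
    calc (1 - r ^ s) ^ 2 * r = (r ^ s - 1) ^ 2 * r := by ring
      _ ≤ (r ^ s * (1 - r)) ^ 2 * r := by gcongr; linarith
      _ = (r ^ s * r ^ s * r) * (1 - r) ^ 2 := by ring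
      _ ≤ 1 * (1 - r) ^ 2 := by gcongr
      _ ≤ (1 + s ^ 2) * (1 - r) ^ 2 := by gcongr; nlinarith

lemma rpow_sub_rpow_sq_mul_le {a b s : ℝ} (hb : 0 < b) (hba : b ≤ a) (hs : -1 / 2 ≤ s) :
    (a ^ s - b ^ s) ^ 2 * (a * b) ≤ (1 + s ^ 2) * (a ^ s) ^ 2 * (a - b) ^ 2 := by
  have ha : 0 < a := hb.trans_le hba
  obtain ⟨r, hr0, hr1, rfl⟩ : ∃ r, 0 < r ∧ r ≤ 1 ∧ b = a * r :=
    ⟨b / a, div_pos hb ha, (div_le_one ha).2 hba, by field_simp⟩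
  rw [mul_rpow ha.le hr0.le]
  calc (a ^ s - a ^ s * r ^ s) ^ 2 * (a * (a * r))
        = (a ^ s) ^ 2 * a ^ 2 * ((1 - r ^ s) ^ 2 * r) := by ring
    _ ≤ (a ^ s) ^ 2 * a ^ 2 * ((1 + s ^ 2) * (1 - r) ^ 2) := by
        gcongr ?_ * ?_; exact one_sub_rpow_sq_mul_le hr0 hr1 hs
    _ = (1 + s ^ 2) * (a ^ s) ^ 2 * (a - a * r) ^ 2 := by ring

lemma rpow_add_one_le_rpow_mul_sub {a b e : ℝ} (hb : 0 < b) (hba : b ≤ a) (he : -1 ≤ e)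
    (he0 : e ≤ 0) :
    b ^ (e + 1) ≤ a ^ e * (b - e * (a - b)) := by
  have ha : 0 < a := hb.trans_le hba
  have h := geom_mean_le_arith_mean2_weighted (by linarith : 0 ≤ e + 1) (by linarith : 0 ≤ -e)
    hb.le ha.le (by ring)
  rw [rpow_neg ha.le, ← div_eq_mul_inv, div_le_iff₀ (rpow_pos_of_pos ha e)] at h
  linarith

lemma min_mul_rpow_mul_sub_le {a b e : ℝ} (hb : 1 ≤ b) (hba : b ≤ a) (he : -1 ≤ e) :
    min 1 (e + 1) * (a ^ e * (a - b)) ≤ a ^ e * (a - 1) - b ^ e * (b - 1) := by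
  have hb0 : 0 < b := by linarith
  have ha0 : 0 < a := by linarith
  rcases le_total 0 e with he0 | he0
  · have hbe : b ^ e ≤ a ^ e := rpow_le_rpow hb0.le hba he0
    calc min 1 (e + 1) * (a ^ e * (a - b)) ≤ a ^ e * (a - b) :=
          mul_le_of_le_one_left (mul_nonneg (rpow_nonneg ha0.le e) (sub_nonneg.2 hba))
            (min_le_left _ _)
      _ ≤ a ^ e * (a - 1) - b ^ e * (b - 1) := by nlinarith
  · have hbe : a ^ e ≤ b ^ e := rpow_le_rpow_of_nonpos hb0 hba he0
    have h := rpow_add_one_le_rpow_mul_sub hb0 hba he he0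
    rw [rpow_add_one hb0.ne'] at h
    rw [min_eq_right (by linarith)]
    nlinarith

lemma sq_sub_le_of_le {x y s : ℝ} (hy : 0 ≤ y) (hyx : y ≤ x) (hs : -1 / 2 < s) :
    ((1 + x) ^ s * x - (1 + y) ^ s * y) ^ 2 ≤ (1 + (1 + s ^ 2) / min 1 (2 * s + 1)) *
      ((((1 + x) ^ s) ^ 2 * x - ((1 + y) ^ s) ^ 2 * y) * (x - y)) := by
  have hb : 1 ≤ 1 + y := by linarith
  have hba : 1 + y ≤ 1 + x := by linarith
  have hm : 0 < min 1 (2 * s + 1) := lt_min one_pos (by linarith)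
  have hsq : ∀ t : ℝ, 0 ≤ t → (t ^ s) ^ 2 = t ^ (2 * s) := fun t ht => by
    rw [← rpow_two, ← rpow_mul ht, mul_comm]
  set u := (1 + x) ^ s
  set v := (1 + y) ^ s
  set Q := (u ^ 2 * x - v ^ 2 * y) * (x - y)
  have hlow : min 1 (2 * s + 1) * (u ^ 2 * (x - y) ^ 2) ≤ Q := by
    have h := min_mul_rpow_mul_sub_le hb hba (by linarith : -1 ≤ 2 * s)
    rw [← hsq _ (by linarith), ← hsq _ (by linarith)] at h
    have := mul_le_mul_of_nonneg_right h (sub_nonneg.2 hyx)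
    simp only [add_sub_add_left_eq_sub, add_sub_cancel_left] at this
    linarith
  have hup : (u - v) ^ 2 * (x * y) ≤ (1 + s ^ 2) * u ^ 2 * (x - y) ^ 2 := by
    have h := rpow_sub_rpow_sq_mul_le (by linarith) hba hs.le
    rw [add_sub_add_left_eq_sub] at h
    refine le_trans ?_ h
    gcongr <;> linarith
  calc (u * x - v * y) ^ 2 = Q + (u - v) ^ 2 * (x * y) := by ring
    _ ≤ Q + (1 + s ^ 2) / min 1 (2 * s + 1) * min 1 (2 * s + 1) * (u ^ 2 * (x - y) ^ 2) := by
        rw [div_mul_cancel₀ _ hm.ne']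
        linarith
    _ ≤ Q + (1 + s ^ 2) / min 1 (2 * s + 1) * Q := by rw [mul_assoc]; gcongr
    _ = (1 + (1 + s ^ 2) / min 1 (2 * s + 1)) * Q := by ring

lemma exists_sq_sub_le {s : ℝ} (hs : -1 / 2 < s) :
    ∃ C, 1 ≤ C ∧ ∀ x y : ℝ, 0 ≤ x → 0 ≤ y →
      ((1 + x) ^ s * x - (1 + y) ^ s * y) ^ 2 ≤
        C * ((((1 + x) ^ s) ^ 2 * x - ((1 + y) ^ s) ^ 2 * y) * (x - y)) := by
  refine ⟨1 + (1 + s ^ 2) / min 1 (2 * s + 1), ?_, fun x y hx hy => ?_⟩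
  · have : 0 < min 1 (2 * s + 1) := lt_min one_pos (by linarith)
    have : 0 ≤ (1 + s ^ 2) / min 1 (2 * s + 1) := by positivity
    linarith
  rcases le_total y x with hyx | hxy
  · exact sq_sub_le_of_le hy hyx hs
  · have h := sq_sub_le_of_le hx hxy hs
    calc ((1 + x) ^ s * x - (1 + y) ^ s * y) ^ 2
          = ((1 + y) ^ s * y - (1 + x) ^ s * x) ^ 2 := by ring
      _ ≤ _ := h
      _ = _ := by ring

lemma mul_norm_smul_sub_smul_sq_le_inner {E : Type*} [NormedAddCommGroup E]
    [InnerProductSpace ℝ E] {c u v : ℝ} (hc : c ≤ 1) (hu : 0 ≤ u) (hv : 0 ≤ v) (ξ η : E)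
    (h : c * (u * ‖ξ‖ - v * ‖η‖) ^ 2 ≤ (u ^ 2 * ‖ξ‖ - v ^ 2 * ‖η‖) * (‖ξ‖ - ‖η‖)) :
    c * ‖u • ξ - v • η‖ ^ 2 ≤ ⟪u ^ 2 • ξ - v ^ 2 • η, ξ - η⟫ := by
  have hS : ⟪u ^ 2 • ξ - v ^ 2 • η, ξ - η⟫ =
      u ^ 2 * ‖ξ‖ ^ 2 + v ^ 2 * ‖η‖ ^ 2 - (u ^ 2 + v ^ 2) * ⟪ξ, η⟫ := by
    simp only [inner_sub_left, inner_sub_right, real_inner_smul_left, real_inner_self_eq_norm_sq,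
      real_inner_comm ξ η]
    ring
  have hF : ‖u • ξ - v • η‖ ^ 2 = u ^ 2 * ‖ξ‖ ^ 2 + v ^ 2 * ‖η‖ ^ 2 - 2 * (u * v) * ⟪ξ, η⟫ := by
    rw [norm_sub_sq_real, norm_smul, norm_smul, real_inner_smul_left, real_inner_smul_right,
      Real.norm_of_nonneg hu, Real.norm_of_nonneg hv]
    ring
  have hslope : 0 ≤ u ^ 2 + v ^ 2 - 2 * c * (u * v) := by
    nlinarith [sq_nonneg (u - v), mul_nonneg hu hv]
  have hcs := mul_nonneg (sub_nonneg.2 (real_inner_le_norm ξ η)) hslope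
  rw [hS, hF]
  nlinarith

/-- the monotonicity quantity of `S` controls `|F(ξ) − F(η)|²`. -/
theorem S_controls_F (d D : ℕ) (p : ℝ) (hp : 1 < p)
    (S F : EuclideanSpace ℝ (Fin d × Fin D) → EuclideanSpace ℝ (Fin d × Fin D))
    (hS : ∀ ξ, S ξ = ((1 + ‖ξ‖) ^ (p - 2) : ℝ) • ξ)
    (hF : ∀ ξ, F ξ = ((1 + ‖ξ‖) ^ ((p - 2) / 2) : ℝ) • ξ) :
    ∃ c : ℝ, 0 < c ∧ ∀ ξ η : EuclideanSpace ℝ (Fin d × Fin D),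
      c * ‖F ξ - F η‖ ^ 2 ≤ ⟪S ξ - S η, ξ - η⟫ := by
  obtain ⟨C, hC, hscalar⟩ := exists_sq_sub_le (s := (p - 2) / 2) (by linarith)
  have hC0 : 0 < C := by linarith
  refine ⟨C⁻¹, inv_pos.2 hC0, fun ξ η => ?_⟩
  have hsq : ∀ ζ : EuclideanSpace ℝ (Fin d × Fin D),
      (1 + ‖ζ‖) ^ (p - 2) = ((1 + ‖ζ‖) ^ ((p - 2) / 2)) ^ 2 := fun ζ => by
    rw [← rpow_two, ← rpow_mul (by positivity)]; ring_nf
  rw [hS, hS, hF, hF, hsq, hsq]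
  refine mul_norm_smul_sub_smul_sq_le_inner (inv_le_one_of_one_le₀ hC) (by positivity)
    (by positivity) ξ η ?_
  rw [inv_mul_le_iff₀ hC0]
  exact hscalar _ _ (norm_nonneg ξ) (norm_nonneg η)
end

section
/- Let α ≥ 0 and h(s) = ∫₀ˢ (1+θ)^α θ dθ. Then there exists c = c(α) > 0 such that for all s, t ≥ 0: (h′(s)/s) · t² ≤ c (1 + h(s) + h(t) t²), where h′(s)/s is interpreted as its limit (1) at s = 0. -/
open MeasureTheory

lemma moser_cont (α : ℝ) : ContinuousOn (fun θ : ℝ => (1 + θ) ^ α * θ) (Set.Ici 0) := by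
  apply ContinuousOn.mul _ continuousOn_id
  apply ContinuousOn.rpow_const (by fun_prop)
  intro x hx
  left
  simp only [Set.mem_Ici] at hx
  positivity

lemma moser_intble (α : ℝ) {a b : ℝ} (ha : 0 ≤ a) (hab : a ≤ b) :
    IntervalIntegrable (fun θ : ℝ => (1 + θ) ^ α * θ) volume a b := by
  apply ContinuousOn.intervalIntegrable
  apply (moser_cont α).mono
  rw [Set.uIcc_of_le hab]
  intro x hx
  exact le_trans ha hx.1

lemma moser_nonneg (α : ℝ) {a b : ℝ} (ha : 0 ≤ a) (hab : a ≤ b) :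
    0 ≤ ∫ θ in a..b, (1 + θ) ^ α * θ := by
  apply intervalIntegral.integral_nonneg hab
  intro u hu
  have h1 : 0 ≤ u := le_trans ha hu.1
  positivity

lemma moser_lb (α : ℝ) (hα : 0 ≤ α) (s : ℝ) (hs : 0 ≤ s) :
    (1 + s) ^ α * s ^ 2 ≤ 2 ^ (α + 2) * ∫ θ in (0:ℝ)..s, (1 + θ) ^ α * θ := by
  have hs2 : (0:ℝ) ≤ s / 2 := by linarith
  have hs2' : s / 2 ≤ s := by linarith
  have hsplit : (∫ θ in (0:ℝ)..(s/2), (1 + θ) ^ α * θ) + ∫ θ in (s/2)..s, (1 + θ) ^ α * θ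
      = ∫ θ in (0:ℝ)..s, (1 + θ) ^ α * θ :=
    intervalIntegral.integral_add_adjacent_intervals (moser_intble α le_rfl hs2)
      (moser_intble α hs2 hs2')
  have h1 : (∫ θ in (s/2)..s, ((1 + s)/2) ^ α * θ) ≤ ∫ θ in (s/2)..s, (1 + θ) ^ α * θ := by
    have hi1 : IntervalIntegrable (fun θ : ℝ => ((1 + s)/2) ^ α * θ) volume (s/2) s :=
      (continuous_const.mul continuous_id).intervalIntegrable _ _
    refine intervalIntegral.integral_mono_on hs2' hi1 (moser_intble α hs2 hs2') ?_
    intro x hx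
    have hx1 : s / 2 ≤ x := hx.1
    have hx0 : 0 ≤ x := le_trans hs2 hx1
    have hb : (1 + s) / 2 ≤ 1 + x := by linarith
    have hb0 : (0:ℝ) ≤ (1 + s) / 2 := by linarith
    exact mul_le_mul_of_nonneg_right (Real.rpow_le_rpow hb0 hb hα) hx0
  have h2 : (∫ θ in (s/2)..s, ((1 + s)/2) ^ α * θ) = ((1 + s)/2) ^ α * (3/8 * s^2) := by
    rw [intervalIntegral.integral_const_mul]
    have hid : (∫ x in (s/2)..s, (x:ℝ)) = (s^2 - (s/2)^2)/2 := by simp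
    rw [hid]; ring
  have h3 : ((1 + s)/2) ^ α * (3/8 * s^2) ≤ ∫ θ in (0:ℝ)..s, (1 + θ) ^ α * θ := by
    have := moser_nonneg α (le_refl (0:ℝ)) hs2
    rw [← hsplit]; rw [h2] at h1; linarith
  have hpow : (1 + s) ^ α = 2 ^ α * ((1 + s)/2) ^ α := by
    rw [← Real.mul_rpow (by norm_num) (by linarith)]
    congr 1
    ring
  have hpow2 : (2:ℝ) ^ (α + 2) = 2 ^ α * 4 := by
    rw [Real.rpow_add (by norm_num), Real.rpow_two]
    norm_num
  have h2α : (0:ℝ) ≤ 2 ^ α := le_of_lt (Real.rpow_pos_of_pos (by norm_num) α)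
  calc (1 + s) ^ α * s ^ 2 = 2 ^ α * (((1 + s)/2) ^ α * s ^ 2) := by rw [hpow]; ring
    _ ≤ 2 ^ α * (4 * (((1 + s)/2) ^ α * (3/8 * s^2))) := by
        apply mul_le_mul_of_nonneg_left _ h2α
        have : (0:ℝ) ≤ ((1 + s)/2) ^ α * s ^ 2 := by positivity
        nlinarith
    _ ≤ 2 ^ α * (4 * ∫ θ in (0:ℝ)..s, (1 + θ) ^ α * θ) := by
        apply mul_le_mul_of_nonneg_left _ h2α
        linarith
    _ = 2 ^ (α + 2) * ∫ θ in (0:ℝ)..s, (1 + θ) ^ α * θ := by rw [hpow2]; ring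

/-- `(1+s)^α t² ≤ c (1 + h(s) + h(t) t²)` for the Moser weight `h`. -/
theorem moser_weight_product_bound (α : ℝ) (hα : 0 ≤ α) (h : ℝ → ℝ)
    (hh : ∀ s, h s = ∫ θ in (0:ℝ)..s, (1 + θ) ^ α * θ) :
    ∃ c : ℝ, 0 < c ∧ ∀ s t : ℝ, 0 ≤ s → 0 ≤ t →
      (1 + s) ^ α * t ^ 2 ≤ c * (1 + h s + h t * t ^ 2) := by
  refine ⟨2 ^ (α + 2), Real.rpow_pos_of_pos (by norm_num) _, ?_⟩
  intro s t hs ht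
  have hc : (0:ℝ) < 2 ^ (α + 2) := Real.rpow_pos_of_pos (by norm_num) _
  have hhs : 0 ≤ h s := by rw [hh]; exact moser_nonneg α le_rfl hs
  have hht : 0 ≤ h t := by rw [hh]; exact moser_nonneg α le_rfl ht
  have hhtt : 0 ≤ h t * t ^ 2 := by positivity
  rcases le_or_gt t s with hts | hst
  · -- t ≤ s : use h s
    have key : (1 + s) ^ α * s ^ 2 ≤ 2 ^ (α + 2) * h s := by rw [hh]; exact moser_lb α hα s hs
    have hmono : (1 + s) ^ α * t ^ 2 ≤ (1 + s) ^ α * s ^ 2 := by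
      apply mul_le_mul_of_nonneg_left _ (Real.rpow_nonneg (by linarith) α)
      nlinarith
    nlinarith
  · rcases le_or_gt t 1 with ht1 | h1t
    · -- s < t ≤ 1 : use the 1
      have hb : (1 + s) ^ α ≤ 2 ^ α := Real.rpow_le_rpow (by linarith) (by linarith) hα
      have h2 : (2:ℝ) ^ α ≤ 2 ^ (α + 2) :=
        Real.rpow_le_rpow_left_iff (by norm_num) |>.mpr (by linarith)
      have ht2 : t ^ 2 ≤ 1 := by nlinarith
      have hb0 : (0:ℝ) ≤ (1 + s) ^ α := Real.rpow_nonneg (by linarith) α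
      nlinarith
    · -- t > 1 : use h t * t²
      have key : (1 + t) ^ α * t ^ 2 ≤ 2 ^ (α + 2) * h t := by rw [hh]; exact moser_lb α hα t ht
      have hb : (1 + s) ^ α ≤ (1 + t) ^ α :=
        Real.rpow_le_rpow (by linarith) (by linarith) hα
      have hmono : (1 + s) ^ α * t ^ 2 ≤ (1 + t) ^ α * t ^ 2 :=
        mul_le_mul_of_nonneg_right hb (by positivity)
      have ht2 : (1:ℝ) ≤ t ^ 2 := by nlinarith
      have htt : h t ≤ h t * t ^ 2 := by nlinarith [mul_le_mul_of_nonneg_left ht2 hht]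
      nlinarith
end

section
/- With the notation of the truncation lemma (α ≥ 0, L ≥ 1, g_L, h_L as defined from a cutoff ψ with |ψ′| ≤ c/L), the function h_L is C² on [0,∞), h_L″ is bounded by a constant depending on L and α, and for all s > 0: h_L′(s)/s ≤ h_L″(s) ≤ c(α+1) h_L′(s)/s and h_L′(s) s ≤ c h_L(s), with c independent of L. -/
/-!
Let `ψ = 1` on `[0, a]` and `ψ = 0` on `[b, ∞)`. Then `h_L' = s g_L` and `h_L'' = g_L + s ψ g'`
with `s ψ g' ≥ 0`, which is the lower bound. Since `0 ≤ ψ ≤ 1`, `g_L` is nondecreasing and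
squeezed, `(1 + min s a) ^ α ≤ g_L s ≤ (1 + min s b) ^ α`, and for `b ≤ 2 a + 1` this yields,
uniformly in `a` and `b`, the doubling bound `g_L s ≤ 2 ^ α g_L (s / 2)` and
`s ψ g' ≤ α 2 ^ α g_L`. Finally `h_L s ≥ ∫_{s/2}^s τ g_L ≥ s² g_L (s / 2) / 4`, which together
with doubling bounds `s h_L' s`.
-/

open MeasureTheory Set Filter Topology intervalIntegral

theorem hasDerivAt_integral_of_continuousOn {f : ℝ → ℝ} {U : Set ℝ} (hU : IsOpen U)
    (hUc : U.OrdConnected) (hf : ContinuousOn f U) {a x : ℝ} (ha : a ∈ U) (hx : x ∈ U) :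
    HasDerivAt (fun x => ∫ t in a..x, f t) (f x) x :=
  integral_hasDerivAt_right (hf.mono (hUc.uIcc_subset ha hx)).intervalIntegrable
    (hf.stronglyMeasurableAtFilter hU x hx) (hf.continuousAt (hU.mem_nhds hx))

theorem hasDerivAt_one_add_rpow (α : ℝ) {θ : ℝ} (hθ : -1 < θ) :
    HasDerivAt (fun θ => (1 + θ) ^ α) (α * (1 + θ) ^ (α - 1)) θ := by
  simpa using ((hasDerivAt_id θ).const_add 1).rpow_const (p := α)
    (Or.inl (by simp only [id_eq]; linarith))

theorem continuousOn_mul_one_add_rpow_sub_one (α : ℝ) :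
    ContinuousOn (fun θ : ℝ => α * (1 + θ) ^ (α - 1)) (Ioi (-1)) :=
  continuousOn_const.mul <| (continuousOn_id.const_add 1).rpow_const
    fun θ hθ => Or.inl (by simp only [mem_Ioi, id_eq] at hθ ⊢; linarith)

theorem integral_mul_one_add_rpow_sub_one (α : ℝ) {s : ℝ} (hs : -1 < s) :
    ∫ θ in (0:ℝ)..s, α * (1 + θ) ^ (α - 1) = (1 + s) ^ α - 1 := by
  have hsub : uIcc 0 s ⊆ Ioi (-1) := ordConnected_Ioi.uIcc_subset (by norm_num) hs
  rw [integral_eq_sub_of_hasDerivAt (fun θ hθ => hasDerivAt_one_add_rpow α (hsub hθ))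
    ((continuousOn_mul_one_add_rpow_sub_one α).mono hsub).intervalIntegrable]
  simp

theorem mul_one_add_rpow_sub_one_le {α s : ℝ} (hs : 0 ≤ s) :
    s * (1 + s) ^ (α - 1) ≤ (1 + s) ^ α := by
  have hpos : 0 < 1 + s := by linarith
  calc s * (1 + s) ^ (α - 1) ≤ (1 + s) * (1 + s) ^ (α - 1) := by
        gcongr; linarith
    _ = (1 + s) ^ α := by rw [mul_comm, ← Real.rpow_add_one hpos.ne']; ring_nf

/-- The paper's `g_L` for `g θ = (1 + θ) ^ α`, with `ψ` standing for `ψ_L`. -/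
noncomputable def truncWeight (α : ℝ) (ψ : ℝ → ℝ) (τ : ℝ) : ℝ :=
  1 + ∫ θ in (0:ℝ)..τ, ψ θ * (α * (1 + θ) ^ (α - 1))

noncomputable def truncPotential (α : ℝ) (ψ : ℝ → ℝ) (s : ℝ) : ℝ :=
  ∫ τ in (0:ℝ)..s, τ * truncWeight α ψ τ

section Calculus

variable {α : ℝ} {ψ : ℝ → ℝ}

theorem continuousOn_truncIntegrand (hψ : Continuous ψ) :
    ContinuousOn (fun θ => ψ θ * (α * (1 + θ) ^ (α - 1))) (Ioi (-1)) :=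
  hψ.continuousOn.mul (continuousOn_mul_one_add_rpow_sub_one α)

theorem hasDerivAt_truncWeight (hψ : Continuous ψ) {τ : ℝ} (hτ : -1 < τ) :
    HasDerivAt (truncWeight α ψ) (ψ τ * (α * (1 + τ) ^ (α - 1))) τ :=
  (hasDerivAt_integral_of_continuousOn isOpen_Ioi ordConnected_Ioi
    (continuousOn_truncIntegrand hψ) (by norm_num : (0:ℝ) ∈ Ioi (-1)) hτ).const_add 1

theorem continuousOn_truncWeight (hψ : Continuous ψ) :
    ContinuousOn (truncWeight α ψ) (Ioi (-1)) :=
  fun _ hτ => (hasDerivAt_truncWeight hψ hτ).continuousAt.continuousWithinAt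

theorem hasDerivAt_truncPotential (hψ : Continuous ψ) {s : ℝ} (hs : -1 < s) :
    HasDerivAt (truncPotential α ψ) (s * truncWeight α ψ s) s :=
  hasDerivAt_integral_of_continuousOn isOpen_Ioi ordConnected_Ioi
    (continuousOn_id.mul (continuousOn_truncWeight hψ)) (by norm_num : (0:ℝ) ∈ Ioi (-1)) hs

theorem deriv_truncPotential (hψ : Continuous ψ) {s : ℝ} (hs : -1 < s) :
    deriv (truncPotential α ψ) s = s * truncWeight α ψ s :=
  (hasDerivAt_truncPotential hψ hs).deriv

theorem hasDerivAt_deriv_truncPotential (hψ : Continuous ψ) {s : ℝ} (hs : -1 < s) :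
    HasDerivAt (deriv (truncPotential α ψ))
      (truncWeight α ψ s + s * (ψ s * (α * (1 + s) ^ (α - 1)))) s := by
  have hderiv : deriv (truncPotential α ψ) =ᶠ[𝓝 s] fun s => s * truncWeight α ψ s :=
    eventually_of_mem (isOpen_Ioi.mem_nhds hs) fun _ hx => deriv_truncPotential hψ hx
  simpa using ((hasDerivAt_id s).mul (hasDerivAt_truncWeight hψ hs)).congr_of_eventuallyEq hderiv

theorem deriv_deriv_truncPotential (hψ : Continuous ψ) {s : ℝ} (hs : -1 < s) :
    deriv (deriv (truncPotential α ψ)) s =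
      truncWeight α ψ s + s * (ψ s * (α * (1 + s) ^ (α - 1))) :=
  (hasDerivAt_deriv_truncPotential hψ hs).deriv

theorem contDiffOn_truncPotential (hψ : Continuous ψ) :
    ContDiffOn ℝ 2 (truncPotential α ψ) (Ioi (-1)) := by
  rw [show (2 : WithTop ℕ∞) = 1 + 1 from rfl, contDiffOn_succ_iff_deriv_of_isOpen isOpen_Ioi]
  refine ⟨fun s hs => (hasDerivAt_truncPotential hψ hs).differentiableAt.differentiableWithinAt,
    by simp, ?_⟩
  rw [show (1 : WithTop ℕ∞) = 0 + 1 from rfl, contDiffOn_succ_iff_deriv_of_isOpen isOpen_Ioi,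
    contDiffOn_zero]
  refine ⟨fun s hs =>
    (hasDerivAt_deriv_truncPotential hψ hs).differentiableAt.differentiableWithinAt, by simp, ?_⟩
  exact ((continuousOn_truncWeight (α := α) hψ).add
    (continuousOn_id.mul (continuousOn_truncIntegrand hψ))).congr
    fun s hs => deriv_deriv_truncPotential hψ hs

end Calculus

section Order

variable {α : ℝ} {ψ : ℝ → ℝ}

@[simp] theorem truncWeight_zero : truncWeight α ψ 0 = 1 := by simp [truncWeight]

theorem truncWeight_sub_truncWeight (hψ : Continuous ψ) {x y : ℝ} (hx : -1 < x) (hy : -1 < y) :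
    truncWeight α ψ y - truncWeight α ψ x = ∫ θ in x..y, ψ θ * (α * (1 + θ) ^ (α - 1)) := by
  have hint : ∀ z : ℝ, -1 < z →
      IntervalIntegrable (fun θ => ψ θ * (α * (1 + θ) ^ (α - 1))) volume 0 z := fun z hz =>
    ((continuousOn_truncIntegrand hψ).mono
      (ordConnected_Ioi.uIcc_subset (by norm_num) hz)).intervalIntegrable
  rw [truncWeight, truncWeight, add_sub_add_left_eq_sub,
    integral_interval_sub_left (hint y hy) (hint x hx)]

theorem monotoneOn_truncWeight (hα : 0 ≤ α) (hψ : Continuous ψ) (hψ_nonneg : ∀ θ, 0 ≤ ψ θ) :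
    MonotoneOn (truncWeight α ψ) (Ici 0) := by
  intro x (hx : 0 ≤ x) y _ hxy
  rw [← sub_nonneg, truncWeight_sub_truncWeight hψ (by linarith) (by linarith)]
  refine integral_nonneg hxy fun θ hθ => ?_
  have : 0 < 1 + θ := by linarith [hθ.1]
  have := hψ_nonneg θ
  positivity

theorem one_le_truncWeight (hα : 0 ≤ α) (hψ : Continuous ψ) (hψ_nonneg : ∀ θ, 0 ≤ ψ θ)
    {s : ℝ} (hs : 0 ≤ s) : 1 ≤ truncWeight α ψ s := by
  simpa using monotoneOn_truncWeight hα hψ hψ_nonneg self_mem_Ici hs hs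

theorem truncWeight_eq_rpow {a : ℝ} (hψ_one : ∀ θ ∈ Icc 0 a, ψ θ = 1) {s : ℝ} (hs : 0 ≤ s)
    (hsa : s ≤ a) : truncWeight α ψ s = (1 + s) ^ α := by
  have hψs : EqOn (fun θ => ψ θ * (α * (1 + θ) ^ (α - 1))) (fun θ => α * (1 + θ) ^ (α - 1))
      (uIcc 0 s) := fun θ hθ => by
    rw [uIcc_of_le hs] at hθ
    simp [hψ_one θ ⟨hθ.1, hθ.2.trans hsa⟩]
  rw [truncWeight, integral_congr hψs, integral_mul_one_add_rpow_sub_one α (by linarith)]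
  ring

theorem truncWeight_le_rpow (hα : 0 ≤ α) (hψ : Continuous ψ) (hψ_le_one : ∀ θ, ψ θ ≤ 1)
    {s : ℝ} (hs : 0 ≤ s) : truncWeight α ψ s ≤ (1 + s) ^ α := by
  have hsub : uIcc 0 s ⊆ Ioi (-1) :=
    ordConnected_Ioi.uIcc_subset (by norm_num) (show -1 < s by linarith)
  have hmono : ∫ θ in (0:ℝ)..s, ψ θ * (α * (1 + θ) ^ (α - 1)) ≤
      ∫ θ in (0:ℝ)..s, α * (1 + θ) ^ (α - 1) := by
    refine integral_mono_on hs ((continuousOn_truncIntegrand hψ).mono hsub).intervalIntegrable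
      ((continuousOn_mul_one_add_rpow_sub_one α).mono hsub).intervalIntegrable fun θ hθ => ?_
    have : 0 < 1 + θ := by linarith [hθ.1]
    exact mul_le_of_le_one_left (by positivity) (hψ_le_one θ)
  rw [truncWeight]
  linarith [integral_mul_one_add_rpow_sub_one α (s := s) (by linarith)]

theorem truncWeight_eq_of_le {b : ℝ} (hψ : Continuous ψ) (hψ_zero : ∀ θ, b ≤ θ → ψ θ = 0)
    (hb : -1 < b) {s : ℝ} (hbs : b ≤ s) : truncWeight α ψ s = truncWeight α ψ b := by
  rw [← sub_eq_zero, truncWeight_sub_truncWeight hψ hb (by linarith)]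
  refine (integral_congr fun θ hθ => ?_).trans integral_zero
  rw [uIcc_of_le hbs] at hθ
  simp [hψ_zero θ hθ.1]

end Order

structure IsCutoff (ψ : ℝ → ℝ) (a b : ℝ) : Prop where
  continuous : Continuous ψ
  nonneg : ∀ θ, 0 ≤ ψ θ
  le_one : ∀ θ, ψ θ ≤ 1
  eq_one : ∀ θ ∈ Icc 0 a, ψ θ = 1
  eq_zero : ∀ θ, b ≤ θ → ψ θ = 0

namespace IsCutoff

variable {α a b s : ℝ} {ψ : ℝ → ℝ}

theorem rpow_min_le_truncWeight (h : IsCutoff ψ a b) (hα : 0 ≤ α) (ha : 0 ≤ a) (hs : 0 ≤ s) :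
    (1 + min s a) ^ α ≤ truncWeight α ψ s := by
  rw [← truncWeight_eq_rpow h.eq_one (le_min hs ha) (min_le_right s a)]
  exact monotoneOn_truncWeight hα h.continuous h.nonneg (le_min hs ha : (0:ℝ) ≤ min s a) hs
    (min_le_left s a)

theorem truncWeight_le_rpow_min (h : IsCutoff ψ a b) (hα : 0 ≤ α) (hb : 0 ≤ b) (hs : 0 ≤ s) :
    truncWeight α ψ s ≤ (1 + min s b) ^ α := by
  rcases le_total s b with hsb | hbs
  · rw [min_eq_left hsb]
    exact truncWeight_le_rpow hα h.continuous h.le_one hs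
  · rw [min_eq_right hbs, truncWeight_eq_of_le h.continuous h.eq_zero (by linarith) hbs]
    exact truncWeight_le_rpow hα h.continuous h.le_one hb

/-- The doubling step: `1 + min s b ≤ 2 (1 + min (s / 2) a)` as soon as `b ≤ 2 a + 1`. -/
theorem rpow_min_le_two_rpow_mul_truncWeight_half (h : IsCutoff ψ a b) (hα : 0 ≤ α)
    (ha : 0 ≤ a) (hb : 0 ≤ b) (hab : b ≤ 2 * a + 1) (hs : 0 ≤ s) :
    (1 + min s b) ^ α ≤ 2 ^ α * truncWeight α ψ (s / 2) := by
  have hmin : 1 + min s b ≤ 2 * (1 + min (s / 2) a) := by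
    rcases le_total (s / 2) a with h' | h' <;> simp only [min_eq_left, min_eq_right, h'] <;>
      linarith [min_le_left s b, min_le_right s b]
  calc (1 + min s b) ^ α ≤ (2 * (1 + min (s / 2) a)) ^ α :=
        Real.rpow_le_rpow (by linarith [le_min hs hb]) hmin hα
    _ = 2 ^ α * (1 + min (s / 2) a) ^ α :=
        Real.mul_rpow zero_le_two (by linarith [le_min (by positivity : (0:ℝ) ≤ s / 2) ha])
    _ ≤ 2 ^ α * truncWeight α ψ (s / 2) := by
        gcongr
        exact h.rpow_min_le_truncWeight hα ha (by positivity : (0:ℝ) ≤ s / 2)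

theorem truncWeight_le_two_rpow_mul_half (h : IsCutoff ψ a b) (hα : 0 ≤ α) (ha : 0 ≤ a)
    (hb : 0 ≤ b) (hab : b ≤ 2 * a + 1) (hs : 0 ≤ s) :
    truncWeight α ψ s ≤ 2 ^ α * truncWeight α ψ (s / 2) :=
  (h.truncWeight_le_rpow_min hα hb hs).trans
    (h.rpow_min_le_two_rpow_mul_truncWeight_half hα ha hb hab hs)

theorem mul_truncIntegrand_le (h : IsCutoff ψ a b) (hα : 0 ≤ α) (ha : 0 ≤ a)
    (hab : b ≤ 2 * a + 1) (hs : 0 ≤ s) :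
    s * (ψ s * (α * (1 + s) ^ (α - 1))) ≤ α * 2 ^ α * truncWeight α ψ s := by
  have hweight := one_le_truncWeight hα h.continuous h.nonneg hs
  rcases le_total b s with hbs | hsb
  · rw [h.eq_zero s hbs]
    simpa using mul_nonneg (mul_nonneg hα (by positivity)) (zero_le_one.trans hweight)
  have hpow : 0 ≤ (1 + s) ^ (α - 1) := Real.rpow_nonneg (by linarith) _
  calc s * (ψ s * (α * (1 + s) ^ (α - 1))) ≤ α * (s * (1 + s) ^ (α - 1)) := by
        have := mul_le_of_le_one_left (mul_nonneg hα hpow) (h.le_one s)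
        nlinarith
    _ ≤ α * (1 + min s b) ^ α := by
        rw [min_eq_left hsb]
        exact mul_le_mul_of_nonneg_left (mul_one_add_rpow_sub_one_le hs) hα
    _ ≤ α * (2 ^ α * truncWeight α ψ (s / 2)) :=
        mul_le_mul_of_nonneg_left
          (h.rpow_min_le_two_rpow_mul_truncWeight_half hα ha (hs.trans hsb) hab hs) hα
    _ ≤ α * 2 ^ α * truncWeight α ψ s := by
        rw [← mul_assoc]
        gcongr
        exact monotoneOn_truncWeight hα h.continuous h.nonneg (by positivity : (0:ℝ) ≤ s / 2) hs
          (by linarith)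

end IsCutoff

section Potential

variable {α s : ℝ} {ψ : ℝ → ℝ}

theorem deriv_truncPotential_div (hψ : Continuous ψ) (hs : 0 < s) :
    deriv (truncPotential α ψ) s / s = truncWeight α ψ s := by
  rw [deriv_truncPotential hψ (by linarith), mul_div_cancel_left₀ _ hs.ne']

theorem truncWeight_le_deriv_deriv_truncPotential (hα : 0 ≤ α) (hψ : Continuous ψ)
    (hψ_nonneg : ∀ θ, 0 ≤ ψ θ) (hs : 0 ≤ s) :
    truncWeight α ψ s ≤ deriv (deriv (truncPotential α ψ)) s := by
  rw [deriv_deriv_truncPotential hψ (by linarith), le_add_iff_nonneg_right]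
  have : 0 < 1 + s := by linarith
  have := hψ_nonneg s
  positivity

theorem IsCutoff.deriv_deriv_truncPotential_le {a b : ℝ} (h : IsCutoff ψ a b) (hα : 0 ≤ α)
    (ha : 0 ≤ a) (hab : b ≤ 2 * a + 1) (hs : 0 ≤ s) :
    deriv (deriv (truncPotential α ψ)) s ≤ (1 + α * 2 ^ α) * truncWeight α ψ s := by
  rw [deriv_deriv_truncPotential h.continuous (by linarith)]
  linarith [h.mul_truncIntegrand_le hα ha hab hs]

theorem IsCutoff.abs_deriv_deriv_truncPotential_le {a b : ℝ} (h : IsCutoff ψ a b) (hα : 0 ≤ α)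
    (ha : 0 ≤ a) (hb : 0 ≤ b) (hab : b ≤ 2 * a + 1) (hs : 0 ≤ s) :
    |deriv (deriv (truncPotential α ψ)) s| ≤ (1 + α * 2 ^ α) * (1 + b) ^ α := by
  have hweight := one_le_truncWeight hα h.continuous h.nonneg hs
  have hlower := truncWeight_le_deriv_deriv_truncPotential hα h.continuous h.nonneg hs
  rw [abs_of_nonneg (by linarith)]
  calc deriv (deriv (truncPotential α ψ)) s ≤ (1 + α * 2 ^ α) * truncWeight α ψ s :=
        h.deriv_deriv_truncPotential_le hα ha hab hs
    _ ≤ (1 + α * 2 ^ α) * (1 + b) ^ α := by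
        gcongr
        exact (h.truncWeight_le_rpow_min hα hb hs).trans
          (Real.rpow_le_rpow (by linarith [le_min hs hb]) (by linarith [min_le_right s b]) hα)

/-- On `[s / 2, s]` the integrand `τ g_L(τ)` is at least `(s / 2) g_L(s / 2)`. -/
theorem sq_mul_truncWeight_half_le (hα : 0 ≤ α) (hψ : Continuous ψ) (hψ_nonneg : ∀ θ, 0 ≤ ψ θ)
    (hs : 0 ≤ s) : s ^ 2 * truncWeight α ψ (s / 2) ≤ 4 * truncPotential α ψ s := by
  have hmono := monotoneOn_truncWeight hα hψ hψ_nonneg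
  have hint : ∀ x y : ℝ, 0 ≤ x → 0 ≤ y →
      IntervalIntegrable (fun τ => τ * truncWeight α ψ τ) volume x y := fun x y hx hy =>
    ((continuousOn_id.mul (continuousOn_truncWeight hψ)).mono (ordConnected_Ioi.uIcc_subset
      (show -1 < x by linarith) (show -1 < y by linarith))).intervalIntegrable
  have hfirst : 0 ≤ ∫ τ in (0:ℝ)..(s / 2), τ * truncWeight α ψ τ :=
    integral_nonneg (by positivity) fun τ hτ =>
      mul_nonneg hτ.1 (zero_le_one.trans (one_le_truncWeight hα hψ hψ_nonneg hτ.1))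
  have hsecond : (s - s / 2) * (s / 2 * truncWeight α ψ (s / 2)) ≤
      ∫ τ in (s / 2)..s, τ * truncWeight α ψ τ := by
    have := integral_mono_on (by linarith) intervalIntegrable_const
      (hint (s / 2) s (by positivity) hs) fun τ (hτ : τ ∈ Icc (s / 2) s) =>
        mul_le_mul hτ.1 (hmono (by positivity : (0:ℝ) ≤ s / 2) (by linarith [hτ.1] : 0 ≤ τ) hτ.1)
          (zero_le_one.trans (one_le_truncWeight hα hψ hψ_nonneg (by positivity)))
          (by linarith [hτ.1])
    rwa [intervalIntegral.integral_const, smul_eq_mul] at this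
  rw [truncPotential, ← integral_add_adjacent_intervals (hint 0 (s / 2) le_rfl (by positivity))
    (hint (s / 2) s (by positivity) hs)]
  nlinarith

theorem IsCutoff.deriv_truncPotential_mul_le {a b : ℝ} (h : IsCutoff ψ a b) (hα : 0 ≤ α)
    (ha : 0 ≤ a) (hb : 0 ≤ b) (hab : b ≤ 2 * a + 1) (hs : 0 ≤ s) :
    deriv (truncPotential α ψ) s * s ≤ 4 * 2 ^ α * truncPotential α ψ s := by
  rw [deriv_truncPotential h.continuous (by linarith)]
  calc s * truncWeight α ψ s * s = s ^ 2 * truncWeight α ψ s := by ring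
    _ ≤ s ^ 2 * (2 ^ α * truncWeight α ψ (s / 2)) :=
        mul_le_mul_of_nonneg_left (h.truncWeight_le_two_rpow_mul_half hα ha hb hab hs) (sq_nonneg s)
    _ = 2 ^ α * (s ^ 2 * truncWeight α ψ (s / 2)) := by ring
    _ ≤ 2 ^ α * (4 * truncPotential α ψ s) :=
        mul_le_mul_of_nonneg_left (sq_mul_truncWeight_half_le hα h.continuous h.nonneg hs)
          (by positivity)
    _ = 4 * 2 ^ α * truncPotential α ψ s := by ring

end Potential

theorem eqOn_truncPotential {α : ℝ} {ψ g gL hL : ℝ → ℝ} (hg : ∀ θ, g θ = (1 + θ) ^ α)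
    (hgL : ∀ τ, gL τ = g 0 + ∫ θ in (0:ℝ)..τ, ψ θ * deriv g θ)
    (hhL : ∀ s, hL s = ∫ τ in (0:ℝ)..s, τ * gL τ) :
    EqOn hL (truncPotential α ψ) (Ioi (-1)) := by
  have hsub : ∀ {x : ℝ}, -1 < x → uIcc 0 x ⊆ Ioi (-1) := fun hx =>
    ordConnected_Ioi.uIcc_subset (by norm_num) hx
  have hweight : EqOn gL (truncWeight α ψ) (Ioi (-1)) := fun τ hτ => by
    have hderiv : EqOn (fun θ => ψ θ * deriv g θ) (fun θ => ψ θ * (α * (1 + θ) ^ (α - 1)))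
        (uIcc 0 τ) := fun θ hθ => by
      dsimp only
      rw [show g = fun θ => (1 + θ) ^ α from funext hg,
        (hasDerivAt_one_add_rpow α (hsub hτ hθ)).deriv]
    rw [hgL, truncWeight, integral_congr hderiv, hg]
    simp
  intro s hs
  rw [hhL, truncPotential]
  exact integral_congr fun τ hτ => by simp only [hweight (hsub hs hτ)]

theorem truncated_weight_diff_ineq_general (α : ℝ) (hα : 0 ≤ α)
    (ψ : ℝ → ℝ → ℝ)
    (hψC : ∀ L : ℝ, 1 ≤ L → ContDiff ℝ 1 (ψ L))
    (hψ01 : ∀ L : ℝ, 1 ≤ L → ∀ θ : ℝ, 0 ≤ ψ L θ ∧ ψ L θ ≤ 1)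
    (hψ1 : ∀ L : ℝ, 1 ≤ L → ∀ θ ∈ Set.Icc (0:ℝ) (3 * L / 2), ψ L θ = 1)
    (hψ0 : ∀ L : ℝ, 1 ≤ L → ∀ θ : ℝ, 2 * L ≤ θ → ψ L θ = 0)
    (g : ℝ → ℝ) (hg : ∀ θ, g θ = (1 + θ) ^ α)
    (gL : ℝ → ℝ → ℝ)
    (hgL : ∀ L τ : ℝ, gL L τ = g 0 + ∫ θ in (0:ℝ)..τ, ψ L θ * deriv g θ)
    (hL : ℝ → ℝ → ℝ)
    (hhL : ∀ L s : ℝ, hL L s = ∫ τ in (0:ℝ)..s, τ * gL L τ) :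
    (∀ L : ℝ, 1 ≤ L → ContDiffOn ℝ 2 (hL L) (Set.Ici 0)) ∧
    (∀ L : ℝ, 1 ≤ L → ∃ C : ℝ, ∀ s : ℝ, 0 ≤ s → |deriv (deriv (hL L)) s| ≤ C) ∧
    (∃ c : ℝ, 0 < c ∧ ∀ L : ℝ, 1 ≤ L →
      (∀ s : ℝ, 0 < s →
        deriv (hL L) s / s ≤ deriv (deriv (hL L)) s ∧
        deriv (deriv (hL L)) s ≤ c * (α + 1) * (deriv (hL L) s / s)) ∧
      (∀ s : ℝ, 0 ≤ s → deriv (hL L) s * s ≤ c * hL L s)) := by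
  have hcut : ∀ L, 1 ≤ L → IsCutoff (ψ L) (3 * L / 2) (2 * L) := fun L hL1 =>
    ⟨(hψC L hL1).continuous, fun θ => (hψ01 L hL1 θ).1, fun θ => (hψ01 L hL1 θ).2,
      hψ1 L hL1, hψ0 L hL1⟩
  have heq : ∀ L, EqOn (hL L) (truncPotential α (ψ L)) (Ioi (-1)) := fun L =>
    eqOn_truncPotential hg (hgL L) (hhL L)
  have hIci : Ici (0:ℝ) ⊆ Ioi (-1) := Ici_subset_Ioi.mpr (by norm_num)
  have hnhds : ∀ L s, (0:ℝ) ≤ s → hL L =ᶠ[𝓝 s] truncPotential α (ψ L) := fun L s hs =>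
    (heq L).eventuallyEq_of_mem (isOpen_Ioi.mem_nhds (hIci hs))
  have hc : 1 + α * 2 ^ α ≤ 4 * 2 ^ α * (α + 1) := by
    nlinarith [Real.one_le_rpow one_le_two hα]
  refine ⟨fun L hL1 => ?_, fun L hL1 => ⟨(1 + α * 2 ^ α) * (1 + 2 * L) ^ α, fun s hs => ?_⟩,
    4 * 2 ^ α, by positivity, fun L hL1 => ⟨fun s hs => ?_, fun s hs => ?_⟩⟩
  · exact ((contDiffOn_truncPotential (hcut L hL1).continuous).mono hIci).congr
      fun s hs => heq L (hIci hs)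
  · rw [(hnhds L s hs).deriv.deriv_eq]
    exact (hcut L hL1).abs_deriv_deriv_truncPotential_le hα (by linarith) (by linarith)
      (by linarith) hs
  · have hweight := one_le_truncWeight hα (hcut L hL1).continuous (hcut L hL1).nonneg hs.le
    rw [(hnhds L s hs.le).deriv.deriv_eq, (hnhds L s hs.le).deriv_eq,
      deriv_truncPotential_div (hcut L hL1).continuous hs]
    refine ⟨truncWeight_le_deriv_deriv_truncPotential hα (hcut L hL1).continuous
      (hcut L hL1).nonneg hs.le, ?_⟩
    calc deriv (deriv (truncPotential α (ψ L))) s ≤ (1 + α * 2 ^ α) * truncWeight α (ψ L) s :=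
          (hcut L hL1).deriv_deriv_truncPotential_le hα (by linarith) (by linarith) hs.le
      _ ≤ 4 * 2 ^ α * (α + 1) * truncWeight α (ψ L) s := by gcongr
  · rw [(hnhds L s hs).deriv_eq, heq L (hIci hs)]
    exact (hcut L hL1).deriv_truncPotential_mul_le hα (by linarith) (by linarith) (by linarith) hs

/-- regularity and uniform (in `L`) differential inequalities for `h_L`. -/
theorem truncated_weight_diff_ineq (α : ℝ) (hα : 0 ≤ α)
    (ψ : ℝ → ℝ → ℝ) (cψ : ℝ) (hcψ : 0 < cψ)
    (hψC : ∀ L : ℝ, 1 ≤ L → ContDiff ℝ 1 (ψ L))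
    (hψ01 : ∀ L : ℝ, 1 ≤ L → ∀ θ : ℝ, 0 ≤ ψ L θ ∧ ψ L θ ≤ 1)
    (hψ' : ∀ L : ℝ, 1 ≤ L → ∀ θ : ℝ, deriv (ψ L) θ ≤ 0)
    (hψ'bd : ∀ L : ℝ, 1 ≤ L → ∀ θ : ℝ, |deriv (ψ L) θ| ≤ cψ / L)
    (hψ1 : ∀ L : ℝ, 1 ≤ L → ∀ θ ∈ Set.Icc (0:ℝ) (3 * L / 2), ψ L θ = 1)
    (hψ0 : ∀ L : ℝ, 1 ≤ L → ∀ θ : ℝ, 2 * L ≤ θ → ψ L θ = 0)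
    (g : ℝ → ℝ) (hg : ∀ θ, g θ = (1 + θ) ^ α)
    (gL : ℝ → ℝ → ℝ)
    (hgL : ∀ L τ : ℝ, gL L τ = g 0 + ∫ θ in (0:ℝ)..τ, ψ L θ * deriv g θ)
    (hL : ℝ → ℝ → ℝ)
    (hhL : ∀ L s : ℝ, hL L s = ∫ τ in (0:ℝ)..s, τ * gL L τ) :
    (∀ L : ℝ, 1 ≤ L → ContDiffOn ℝ 2 (hL L) (Set.Ici 0)) ∧
    (∀ L : ℝ, 1 ≤ L → ∃ C : ℝ, ∀ s : ℝ, 0 ≤ s → |deriv (deriv (hL L)) s| ≤ C) ∧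
    (∃ c : ℝ, 0 < c ∧ ∀ L : ℝ, 1 ≤ L →
      (∀ s : ℝ, 0 < s →
        deriv (hL L) s / s ≤ deriv (deriv (hL L)) s ∧
        deriv (deriv (hL L)) s ≤ c * (α + 1) * (deriv (hL L) s / s)) ∧
      (∀ s : ℝ, 0 ≤ s → deriv (hL L) s * s ≤ c * hL L s)) :=
  truncated_weight_diff_ineq_general α hα ψ hψC hψ01 hψ1 hψ0 g hg gL hgL hL hhL
end
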